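/- Let A be an r×r real matrix with det A ≠ 0 and all proper minors nonnegative with every row of adj(A) nonzero; fix α ∈ ℝʳ with nonzero alternating-sign coordinates and set y := adj(A)·α. Then y has nonzero coordinates with alternating signs, A y = (det A)·α, and S⁻(Ay) = S⁻(y) = r−1. -/

import Mathlib

/-! By cofactor expansion `adj(A)ᵢⱼ = (-1)^(i+j)` times an `(r-1)`-minor of `A`, so `adj(A)` has a
checkerboard sign pattern, and so does `α` up to one global sign `c`. In
`yᵢ = ∑ⱼ adj(A)ᵢⱼ αⱼ` the checkerboard signs combine to `(-1)^i`, leaving a sum of nonnegative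
terms of which the one at a nonzero entry of row `i` is positive; hence `y` alternates strictly.
So does `A y = det A • α`, and a strictly alternating vector of length `r` has `r - 1` sign
changes. -/

open Matrix

/-- `S⁻(x)`: the number of sign changes of `x` after deleting its zero entries. -/
noncomputable def Sminus {n : ℕ} (x : Fin n → ℝ) : ℕ :=
  sSup {m | ∃ f : Fin (m + 1) → Fin n, StrictMono f ∧
    ∀ i : Fin m, x (f i.castSucc) * x (f i.succ) < 0}

def IsAlternating {n : ℕ} (x : Fin n → ℝ) : Prop :=
  ∀ i : ℕ, ∀ h : i + 1 < n, x ⟨i, Nat.lt_of_succ_lt h⟩ * x ⟨i + 1, h⟩ < 0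

theorem sminus_eq_of_isAlternating {n : ℕ} {x : Fin n → ℝ} (hx : IsAlternating x) :
    Sminus x = n - 1 := by
  cases n with
  | zero =>
    have hempty : {m | ∃ f : Fin (m + 1) → Fin 0, StrictMono f ∧
        ∀ i : Fin m, x (f i.castSucc) * x (f i.succ) < 0} = ∅ :=
      Set.eq_empty_of_forall_notMem fun _ ⟨f, _⟩ => (f 0).elim0
    rw [Sminus, hempty, csSup_empty]
    rfl
  | succ n =>
    refine IsGreatest.csSup_eq ⟨⟨id, strictMono_id, fun i => hx i (by omega)⟩, ?_⟩
    rintro m ⟨f, hf, -⟩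
    simpa using Fintype.card_le_of_injective f hf.injective

theorem IsAlternating.smul {n : ℕ} {x : Fin n → ℝ} (hx : IsAlternating x) {c : ℝ} (hc : c ≠ 0) :
    IsAlternating (c • x) := fun i h => by
  simpa [mul_mul_mul_comm] using mul_neg_of_pos_of_neg (mul_self_pos.2 hc) (hx i h)

theorem IsAlternating.exists_sign {n : ℕ} {x : Fin n → ℝ} (hx : IsAlternating x)
    (hx0 : ∀ i, x i ≠ 0) : ∃ c : ℝ, ∀ i : Fin n, 0 < c * ((-1) ^ (i : ℕ) * x i) := by
  cases n with
  | zero => exact ⟨1, finZeroElim⟩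
  | succ n =>
    refine ⟨x 0, fun i => ?_⟩
    induction i using Fin.induction with
    | zero => simpa using mul_self_pos.2 (hx0 0)
    | succ j ih =>
      have hj : x j.castSucc * x j.succ < 0 := hx j (by omega)
      rw [Fin.val_castSucc] at ih
      rw [Fin.val_succ, pow_succ]
      rcases neg_one_pow_eq_or ℝ (j : ℕ) with hs | hs <;> rw [hs] at ih ⊢ <;>
        nlinarith [mul_self_pos.2 (hx0 0)]

theorem isAlternating_of_sign {n : ℕ} {x : Fin n → ℝ} {c : ℝ}
    (h : ∀ i : Fin n, 0 < c * ((-1) ^ (i : ℕ) * x i)) : IsAlternating x := fun i hi => by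
  have h₁ := h ⟨i, by omega⟩
  have h₂ := h ⟨i + 1, hi⟩
  rw [pow_succ] at h₂
  by_contra! hxy
  rcases neg_one_pow_eq_or ℝ i with hs | hs <;> rw [hs] at h₁ h₂ <;>
    nlinarith [mul_pos h₁ h₂, mul_nonneg (mul_self_nonneg c) hxy]

theorem mulVec_sign_pos {m n : ℕ} {M : Matrix (Fin m) (Fin n) ℝ}
    (hM : ∀ (i : Fin m) (j : Fin n), 0 ≤ (-1) ^ ((i : ℕ) + (j : ℕ)) * M i j) (hrows : ∀ i, ∃ j, M i j ≠ 0)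
    {v : Fin n → ℝ} {c : ℝ} (hv : ∀ j : Fin n, 0 < c * ((-1) ^ (j : ℕ) * v j)) (i : Fin m) :
    0 < c * ((-1) ^ (i : ℕ) * (M *ᵥ v) i) := by
  have hsq (k : ℕ) : (-1 : ℝ) ^ k * (-1) ^ k = 1 := by rw [← mul_pow]; norm_num
  have hterm (j : Fin n) : c * ((-1) ^ (i : ℕ) * (M i j * v j)) =
      ((-1) ^ ((i : ℕ) + (j : ℕ)) * M i j) * (c * ((-1) ^ (j : ℕ) * v j)) := by
    linear_combination (-(c * (-1) ^ (i : ℕ) * M i j * v j)) * hsq j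
  obtain ⟨j₀, hj₀⟩ := hrows i
  rw [mulVec, dotProduct, Finset.mul_sum, Finset.mul_sum, Finset.sum_congr rfl fun j _ => hterm j]
  refine Finset.sum_pos' (fun j _ => mul_nonneg (hM i j) (hv j).le)
    ⟨j₀, Finset.mem_univ _, mul_pos ((hM i j₀).lt_of_ne ?_) (hv j₀)⟩
  exact (mul_ne_zero (pow_ne_zero _ (by norm_num)) hj₀).symm

theorem adjugate_checkerboard_nonneg {n : ℕ} (A : Matrix (Fin (n + 1)) (Fin (n + 1)) ℝ)
    (hminors : ∀ i j : Fin (n + 1), 0 ≤ (A.submatrix i.succAbove j.succAbove).det)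
    (i j : Fin (n + 1)) : 0 ≤ (-1) ^ ((i : ℕ) + (j : ℕ)) * A.adjugate i j := by
  rw [adjugate_fin_succ_eq_det_submatrix, ← mul_assoc, ← pow_add, add_comm (j : ℕ), ← two_mul,
    pow_mul, neg_one_sq, one_pow, one_mul]
  exact hminors j i

/-- Let `A` be `r×r` with `det A ≠ 0`, all proper minors nonnegative, and no zero row of
`adj(A)`. If `α` has nonzero alternating-sign coordinates and `y := adj(A)·α`, then `y` has
nonzero alternating-sign coordinates, `A y = (det A)·α`, and `S⁻(Ay) = S⁻(y) = r - 1`. -/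
theorem stmt14 {r : ℕ} (A : Matrix (Fin r) (Fin r) ℝ) (hdet : A.det ≠ 0)
    (hproper : ∀ p : ℕ, p < r → ∀ (f g : Fin p → Fin r), StrictMono f → StrictMono g →
      0 ≤ (A.submatrix f g).det)
    (hrows : ∀ i : Fin r, ∃ j, A.adjugate i j ≠ 0)
    (α : Fin r → ℝ) (hα0 : ∀ i, α i ≠ 0)
    (hαalt : ∀ i : ℕ, ∀ h : i + 1 < r, α ⟨i, by omega⟩ * α ⟨i + 1, h⟩ < 0) :
    (∀ i, (A.adjugate.mulVec α) i ≠ 0)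
    ∧ (∀ i : ℕ, ∀ h : i + 1 < r,
        (A.adjugate.mulVec α) ⟨i, by omega⟩ * (A.adjugate.mulVec α) ⟨i + 1, h⟩ < 0)
    ∧ A.mulVec (A.adjugate.mulVec α) = A.det • α
    ∧ Sminus (A.mulVec (A.adjugate.mulVec α)) = r - 1
    ∧ Sminus (A.adjugate.mulVec α) = r - 1 := by
  have hAy : A *ᵥ (A.adjugate *ᵥ α) = A.det • α := by
    rw [mulVec_mulVec, mul_adjugate, smul_mulVec, one_mulVec]
  have hadj : ∀ i j : Fin r, 0 ≤ (-1) ^ ((i : ℕ) + j) * A.adjugate i j := by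
    cases r with
    | zero => exact finZeroElim
    | succ n =>
      exact adjugate_checkerboard_nonneg A fun i j =>
        hproper n n.lt_succ_self _ _ (Fin.strictMono_succAbove i) (Fin.strictMono_succAbove j)
  obtain ⟨c, hα⟩ := IsAlternating.exists_sign hαalt hα0
  have hy := mulVec_sign_pos hadj hrows hα
  have hyalt : IsAlternating (A.adjugate *ᵥ α) := isAlternating_of_sign hy
  refine ⟨fun i hi => by simpa [hi] using hy i, hyalt, hAy, ?_, sminus_eq_of_isAlternating hyalt⟩
  rw [hAy]
  exact sminus_eq_of_isAlternating (IsAlternating.smul hαalt hdet)
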